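/- Let F₀ and F₁ be disjoint compact connected subsets of ℝⁿ (n ≥ 2) with |y₁ − y₀| = dist(F₀, F₁) for some y₀ ∈ F₀, y₁ ∈ F₁, and suppose each of F₀ and F₁ has diameter at least 2·dist(F₀,F₁). Then, with ỹ = (y₀+y₁)/2 and r̄ = dist(F₀,F₁)/2, both F₀ and F₁ intersect every sphere S(ỹ, ρ) for r̄ ≤ ρ ≤ 2r̄, and consequently Cap(F₀, F₁; ℝⁿ) ≥ C(n) ln 2. -/
import Mathlib


open MeasureTheory Metric Set ENNReal

/-- The conformal (n-)capacity of the condenser `(F₀, F₁; Ω)`. -/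
noncomputable def conformalCap (n : ℕ)
    (F₀ F₁ Ω : Set (EuclideanSpace ℝ (Fin n))) : ℝ≥0∞ :=
  sInf { e : ℝ≥0∞ | ∃ u : EuclideanSpace ℝ (Fin n) → ℝ,
    (∃ K : NNReal, LipschitzWith K u) ∧
    (∀ x ∈ F₀, u x = 0) ∧ (∀ x ∈ F₁, u x = 1) ∧
    e = ∫⁻ x in Ω, ENNReal.ofReal (‖fderiv ℝ u x‖ ^ n) }

/-- The distance between two sets. -/
noncomputable def setDist {n : ℕ} (A B : Set (EuclideanSpace ℝ (Fin n))) : ℝ :=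
  sInf (Set.image2 dist A B)

/-- `C` is a constant for the continuum capacity lower bound. -/
def ContinuumLowerBoundConst (n : ℕ) (C : ℝ) : Prop :=
  ∀ (x : EuclideanSpace ℝ (Fin n)) (r R : ℝ)
    (F₀ F₁ : Set (EuclideanSpace ℝ (Fin n))),
    0 < r → r < R →
    IsCompact F₀ → IsConnected F₀ → IsCompact F₁ → IsConnected F₁ →
    Disjoint F₀ F₁ →
    (F₀ ∩ sphere x r).Nonempty → (F₀ ∩ sphere x R).Nonempty →
    (F₁ ∩ sphere x r).Nonempty → (F₁ ∩ sphere x R).Nonempty →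
    ENNReal.ofReal (C * Real.log (R / r)) ≤ conformalCap n F₀ F₁ Set.univ

lemma cross_aux {n : ℕ} (F : Set (EuclideanSpace ℝ (Fin n))) (hFc : IsCompact F)
    (hFconn : IsConnected F) (c y : EuclideanSpace ℝ (Fin n)) (hy : y ∈ F)
    (rbar : ℝ) (hr : 0 < rbar) (hyc : dist c y = rbar)
    (hdiam : 4 * rbar ≤ diam F) :
    ∀ ρ ∈ Icc rbar (2 * rbar), (F ∩ sphere c ρ).Nonempty := by
  intro ρ hρ
  have hfc : Continuous (fun x : EuclideanSpace ℝ (Fin n) => dist c x) :=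
    continuous_const.dist continuous_id
  obtain ⟨z, hzF, hz⟩ := hFc.exists_isMaxOn hFconn.nonempty hfc.continuousOn
  have hzc : 2 * rbar ≤ dist c z := by
    by_contra h
    push_neg at h
    have hsub : F ⊆ closedBall c (dist c z) := fun x hx => by
      have := hz hx
      simpa [mem_closedBall, dist_comm] using this
    have hle : diam F ≤ 2 * dist c z := by
      calc diam F ≤ diam (closedBall c (dist c z)) :=
            diam_mono hsub isBounded_closedBall
        _ ≤ 2 * dist c z := diam_closedBall dist_nonneg
    linarith
  have hmem : ρ ∈ (fun x => dist c x) '' F :=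
    hFconn.isPreconnected.intermediate_value hy hzF hfc.continuousOn
      ⟨hyc ▸ hρ.1, le_trans hρ.2 hzc⟩
  obtain ⟨w, hwF, hw⟩ := hmem
  exact ⟨w, hwF, mem_sphere'.mpr hw⟩

/-- two continua realizing their mutual distance at `y₀, y₁` and of
diameter at least twice that distance intersect every sphere centered at the
midpoint with radius between `d/2` and `d`; consequently their capacity is at
least `C(n) ln 2`. -/

theorem close_continua_cross_spheres_and_capacity
    (n : ℕ) (hn : 2 ≤ n)
    (F₀ F₁ : Set (EuclideanSpace ℝ (Fin n)))
    (hF₀c : IsCompact F₀) (hF₀conn : IsConnected F₀)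
    (hF₁c : IsCompact F₁) (hF₁conn : IsConnected F₁)
    (hdisj : Disjoint F₀ F₁)
    (y₀ y₁ : EuclideanSpace ℝ (Fin n)) (hy₀ : y₀ ∈ F₀) (hy₁ : y₁ ∈ F₁)
    (hmin : dist y₀ y₁ = setDist F₀ F₁)
    (hd₀ : 2 * setDist F₀ F₁ ≤ diam F₀) (hd₁ : 2 * setDist F₀ F₁ ≤ diam F₁)
    (ymid : EuclideanSpace ℝ (Fin n)) (hymid : ymid = midpoint ℝ y₀ y₁)
    (rbar : ℝ) (hrbar : rbar = setDist F₀ F₁ / 2) :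
    (∀ ρ ∈ Icc rbar (2 * rbar),
      (F₀ ∩ sphere ymid ρ).Nonempty ∧ (F₁ ∩ sphere ymid ρ).Nonempty) ∧
    (∀ C : ℝ, 0 < C → ContinuumLowerBoundConst n C →
      ENNReal.ofReal (C * Real.log 2) ≤ conformalCap n F₀ F₁ Set.univ) := by
  have hne : y₀ ≠ y₁ := fun h => (Set.disjoint_left.mp hdisj hy₀) (h ▸ hy₁)
  have hdpos : 0 < setDist F₀ F₁ := hmin ▸ dist_pos.mpr hne
  have hr0 : 0 < rbar := by rw [hrbar]; linarith
  have hm0 : dist ymid y₀ = rbar := by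
    rw [hymid, hrbar, dist_midpoint_left, hmin]
    simp; ring
  have hm1 : dist ymid y₁ = rbar := by
    rw [hymid, hrbar, dist_midpoint_right, hmin]
    simp; ring
  have hdiam0 : 4 * rbar ≤ diam F₀ := by rw [hrbar]; linarith
  have hdiam1 : 4 * rbar ≤ diam F₁ := by rw [hrbar]; linarith
  have key : ∀ ρ ∈ Icc rbar (2 * rbar),
      (F₀ ∩ sphere ymid ρ).Nonempty ∧ (F₁ ∩ sphere ymid ρ).Nonempty := by
    intro ρ hρ
    exact ⟨cross_aux F₀ hF₀c hF₀conn ymid y₀ hy₀ rbar hr0 hm0 hdiam0 ρ hρ,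
      cross_aux F₁ hF₁c hF₁conn ymid y₁ hy₁ rbar hr0 hm1 hdiam1 ρ hρ⟩
  refine ⟨key, fun C hC hCprop => ?_⟩
  have h1 : rbar ∈ Icc rbar (2 * rbar) := ⟨le_refl _, by linarith⟩
  have h2 : 2 * rbar ∈ Icc rbar (2 * rbar) := ⟨by linarith, le_refl _⟩
  have := hCprop ymid rbar (2 * rbar) F₀ F₁ hr0 (by linarith)
    hF₀c hF₀conn hF₁c hF₁conn hdisj
    (key rbar h1).1 (key (2 * rbar) h2).1 (key rbar h1).2 (key (2 * rbar) h2).2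
  have hlog : (2 * rbar) / rbar = 2 := by field_simp
  rwa [hlog] at this
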